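/- Let k be a field and C a k-linear Krull–Schmidt category. Fix a set I of representatives of the isomorphism classes of indecomposable objects, and for x ∈ I write D_x = End_C(x)/J(End_C(x)), a division algebra over k. If for every x ∈ I the identity 1_{D_x} does not lie in the k-linear span of the commutators {ab − ba : a, b ∈ D_x}, then the Chern character h_C : K_0(C) ⊗_ℤ k → Tr(C) is injective. -/

import Mathlib

open CategoryTheory CategoryTheory.Limits

universe v u

variable (k : Type*) [Field k]

attribute [local instance] CategoryTheory.Limits.hasBinaryBiproducts_of_finite_biproducts

/-- The submodule of commutator relations defining the trace of a `k`-linear category. -/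
noncomputable def traceRel (C : Type u) [Category.{v} C] [Preadditive C]
    [CategoryTheory.Linear k C] : Submodule k (DirectSum C fun x : C => x ⟶ x) :=
  letI := Classical.decEq C
  Submodule.span k
    {z | ∃ (x y : C) (f : x ⟶ y) (g : y ⟶ x),
      z = DirectSum.of (fun w : C => w ⟶ w) x (f ≫ g)
        - DirectSum.of (fun w : C => w ⟶ w) y (g ≫ f)}

/-- The trace (zeroth Hochschild–Mitchell homology) of a `k`-linear category:
`(⊕ₓ End x) / span{fg - gf}`. -/
noncomputable abbrev Trace (C : Type u) [Category.{v} C] [Preadditive C]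
    [CategoryTheory.Linear k C] : Type _ :=
  (DirectSum C fun x : C => x ⟶ x) ⧸ traceRel k C

/-- The class `[f]` of an endomorphism `f : x ⟶ x` in the trace. -/
noncomputable def traceMk {C : Type u} [Category.{v} C] [Preadditive C]
    [CategoryTheory.Linear k C] {x : C} (f : x ⟶ x) : Trace k C :=
  letI := Classical.decEq C
  Submodule.Quotient.mk (DirectSum.of (fun w : C => w ⟶ w) x f)

theorem traceMk_eq_of_iso {C : Type u} [Category.{v} C] [Preadditive C]
    [CategoryTheory.Linear k C] {x y : C} (e : x ≅ y) :
    traceMk k (𝟙 x) = traceMk k (𝟙 y) := by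
  letI := Classical.decEq C
  unfold traceMk
  rw [Submodule.Quotient.eq, traceRel]
  refine Submodule.subset_span ⟨x, y, e.hom, e.inv, ?_⟩
  rw [Iso.hom_inv_id, Iso.inv_hom_id]

theorem traceMk_comp_comm {C : Type u} [Category.{v} C] [Preadditive C]
    [CategoryTheory.Linear k C] {x y : C} (f : x ⟶ y) (g : y ⟶ x) :
    traceMk k (f ≫ g) = traceMk k (g ≫ f) := by
  letI := Classical.decEq C
  unfold traceMk
  rw [Submodule.Quotient.eq, traceRel]
  exact Submodule.subset_span ⟨x, y, f, g, rfl⟩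

theorem traceMk_add {C : Type u} [Category.{v} C] [Preadditive C]
    [CategoryTheory.Linear k C] {x : C} (f g : x ⟶ x) :
    traceMk k (f + g) = traceMk k f + traceMk k g := by
  letI := Classical.decEq C
  unfold traceMk
  rw [map_add, Submodule.Quotient.mk_add]

theorem traceMk_biprod {C : Type u} [Category.{v} C] [Preadditive C]
    [CategoryTheory.Linear k C] [HasFiniteBiproducts C] (x y : C) :
    traceMk k (𝟙 (x ⊞ y)) = traceMk k (𝟙 x) + traceMk k (𝟙 y) := by
  have h1 : traceMk k (biprod.fst ≫ biprod.inl : x ⊞ y ⟶ x ⊞ y) = traceMk k (𝟙 x) := by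
    rw [traceMk_comp_comm, biprod.inl_fst]
  have h2 : traceMk k (biprod.snd ≫ biprod.inr : x ⊞ y ⟶ x ⊞ y) = traceMk k (𝟙 y) := by
    rw [traceMk_comp_comm, biprod.inr_snd]
  rw [← h1, ← h2, ← traceMk_add, biprod.total]


/-- The relations defining the (split) Grothendieck group with coefficients extended to `k`:
`[x ⊕ y] - [x] - [y]`, together with `[x] - [y]` for isomorphic `x` and `y`. -/
noncomputable def K0Rel (C : Type u) [Category.{v} C] [Preadditive C]
    [CategoryTheory.Linear k C] [HasFiniteBiproducts C] : Submodule k (C →₀ k) :=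
  Submodule.span k
    ({z | ∃ x y : C, z = Finsupp.single (x ⊞ y) (1 : k)
        - Finsupp.single x 1 - Finsupp.single y 1} ∪
     {z | ∃ x y : C, Nonempty (x ≅ y) ∧
        z = Finsupp.single x (1 : k) - Finsupp.single y 1})

/-- The split Grothendieck group of `C`, with coefficients extended from `ℤ` to `k`,
i.e. `K₀(C) ⊗_ℤ k`. -/
noncomputable abbrev K0k (C : Type u) [Category.{v} C] [Preadditive C]
    [CategoryTheory.Linear k C] [HasFiniteBiproducts C] : Type _ :=
  (C →₀ k) ⧸ K0Rel k C

/-- The class `[x] ⊗ 1` of an object `x` in `K₀(C) ⊗_ℤ k`. -/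
noncomputable def K0mk {C : Type u} [Category.{v} C] [Preadditive C]
    [CategoryTheory.Linear k C] [HasFiniteBiproducts C] (x : C) : K0k k C :=
  Submodule.Quotient.mk (Finsupp.single x (1 : k))

/-- The Chern character `h_C : K₀(C) ⊗_ℤ k → Tr(C)`, determined by `[x] ⊗ 1 ↦ [1ₓ]`. -/
noncomputable def chern (C : Type u) [Category.{v} C] [Preadditive C]
    [CategoryTheory.Linear k C] [HasFiniteBiproducts C] : K0k k C →ₗ[k] Trace k C :=
  Submodule.liftQ (K0Rel k C)
    (Finsupp.linearCombination k (fun x : C => traceMk k (𝟙 x)))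
    (by
      rw [K0Rel, Submodule.span_le]
      rintro z (⟨x, y, rfl⟩ | ⟨x, y, ⟨e⟩, rfl⟩) <;>
        simp only [SetLike.mem_coe, LinearMap.mem_ker, map_sub,
          Finsupp.linearCombination_single, one_smul]
      · rw [traceMk_biprod]; abel
      · rw [traceMk_eq_of_iso k e]; abel)

/-- A `k`-linear additive category is Krull–Schmidt if every object decomposes as a finite
direct sum of indecomposable objects with local endomorphism rings, uniquely up to
isomorphism and permutation of the summands. -/
def KrullSchmidt (C : Type u) [Category.{v} C] [Preadditive C]
    [CategoryTheory.Linear k C] [HasFiniteBiproducts C] : Prop :=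
  (∀ x : C, ∃ (n : ℕ) (f : Fin n → C),
      (∀ i, CategoryTheory.Indecomposable (f i) ∧ IsLocalRing (End (f i))) ∧ Nonempty (x ≅ ⨁ f)) ∧
  (∀ (n m : ℕ) (f : Fin n → C) (g : Fin m → C),
      (∀ i, CategoryTheory.Indecomposable (f i) ∧ IsLocalRing (End (f i))) →
      (∀ j, CategoryTheory.Indecomposable (g j) ∧ IsLocalRing (End (g j))) →
      Nonempty ((⨁ f) ≅ ⨁ g) →
      ∃ σ : Fin n ≃ Fin m, ∀ i, Nonempty (f i ≅ g (σ i)))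

/-
Decompose every object as a biproduct of representatives and, for a representative
`x`, send an endomorphism to the sum of the classes of its diagonal entries at the summands
equal to `x`, in `HH₀(D_x) = D_x ⧸ [D_x, D_x]`. This kills `f ≫ g - g ≫ f`: the diagonal
entries of `f ≫ g` and `g ≫ f` are the sums `∑ u_ij ≫ v_ji` and `∑ v_ji ≫ u_ij`, and a composite
`y ⟶ y' ⟶ y` through a non-isomorphic representative lies in the radical of the local ring
`End y`. So it descends to `Tr(C)`, and composed with the Chern character it sends `[x]` to the
class of `1` in the `x`-th factor, which is nonzero by hypothesis. Hence the classes of the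
representatives, which span `K₀(C) ⊗ k`, have linearly independent images.
-/

universe w

namespace IsLocalRing

variable {R : Type*} [Ring R] [IsLocalRing R]

theorem eq_zero_or_eq_one_of_isIdempotentElem {e : R} (he : IsIdempotentElem e) :
    e = 0 ∨ e = 1 := by
  rcases isUnit_or_isUnit_of_add_one (add_sub_cancel e 1) with h | h
  · exact Or.inr (h.mul_left_cancel (he.eq.trans (mul_one e).symm))
  · exact Or.inl (h.mul_left_cancel (by rw [sub_mul, one_mul, he.eq, sub_self, mul_zero]))

instance : IsDedekindFiniteMonoid R where
  mul_eq_one_symm {a b} hab := by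
    have hidem : IsIdempotentElem (b * a) := by
      rw [IsIdempotentElem, mul_assoc, ← mul_assoc a, hab, one_mul]
    refine (eq_zero_or_eq_one_of_isIdempotentElem hidem).resolve_left fun h0 =>
      one_ne_zero (α := R) ?_
    calc (1 : R) = a * (b * a) * b := by rw [← mul_assoc a b a, hab, one_mul, hab]
      _ = 0 := by rw [h0, mul_zero, zero_mul]

theorem mem_jacobson_bot_of_not_isUnit {a : R} (ha : ¬IsUnit a) :
    a ∈ Ideal.jacobson (⊥ : Ideal R) := by
  refine Ideal.mem_jacobson_iff.mpr fun y => ?_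
  have hya : ¬IsUnit (-(y * a)) := fun h => ha (isUnit_of_mul_isUnit_right (by simpa using h))
  obtain ⟨z, hz⟩ := ((isUnit_or_isUnit_of_add_one (neg_add_cancel_left (y * a) 1)).resolve_left
    hya).exists_left_inv
  exact ⟨z, by rw [Submodule.mem_bot, ← hz]; noncomm_ring⟩

end IsLocalRing

theorem Pi.linearIndependent_single_of_ne_zero_on {ι : Type*} [DecidableEq ι] {M : ι → Type*}
    [∀ i, AddCommGroup (M i)] [∀ i, Module k (M i)] {s : Set ι} {m : ∀ i, M i}
    (hm : ∀ i ∈ s, m i ≠ 0) : LinearIndependent k fun i : s => Pi.single (i : ι) (m i) := by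
  rw [linearIndependent_iff']
  intro t g hg i hi
  have hgi := congrFun hg i
  rw [Finset.sum_apply, Finset.sum_eq_single i
    (fun j _ hji => by simp [Pi.single_eq_of_ne' (Subtype.coe_injective.ne hji)])
    (fun h => absurd hi h)] at hgi
  simpa [hm i i.2] using hgi

section

variable (A : Type w) [Ring A] [Algebra k A]

def residualTraceRel : Submodule k A :=
  (Ideal.jacobson (⊥ : Ideal A)).restrictScalars k ⊔
    Submodule.span k {z | ∃ a b : A, z = a * b - b * a}

/-- Isomorphic to `D ⧸ [D, D]` for `D = A ⧸ J(A)`. -/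
def ResidualTrace : Type w := A ⧸ residualTraceRel k A

instance : AddCommGroup (ResidualTrace k A) := inferInstanceAs (AddCommGroup (A ⧸ _))

instance : Module k (ResidualTrace k A) := inferInstanceAs (Module k (A ⧸ _))

namespace ResidualTrace

def mk : A →ₗ[k] ResidualTrace k A := (residualTraceRel k A).mkQ

variable {A}

theorem mk_eq_zero_iff (a : A) : mk k A a = 0 ↔ a ∈ residualTraceRel k A :=
  Submodule.Quotient.mk_eq_zero _

theorem mk_mul_comm (a b : A) : mk k A (a * b) = mk k A (b * a) :=
  (Submodule.Quotient.eq _).mpr (Submodule.mem_sup_right (Submodule.subset_span ⟨a, b, rfl⟩))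

theorem mk_eq_zero_of_mem_jacobson {a : A} (ha : a ∈ Ideal.jacobson (⊥ : Ideal A)) :
    mk k A a = 0 :=
  (mk_eq_zero_iff k a).mpr (Submodule.mem_sup_left ha)

theorem mk_one_ne_zero
    (hD : ∀ (D : Type w) [Ring D] [Algebra k D] (π : A →ₐ[k] D),
        Function.Surjective π →
        RingHom.ker (π : A →+* D) = Ideal.jacobson (⊥ : Ideal A) →
        (1 : D) ∉ Submodule.span k {z : D | ∃ a b : D, z = a * b - b * a}) :
    mk k A 1 ≠ 0 := by
  rw [Ne, mk_eq_zero_iff]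
  let π := Ideal.Quotient.mkₐ k (Ideal.jacobson (⊥ : Ideal A))
  refine fun h1 => hD _ π (Ideal.Quotient.mkₐ_surjective k _) (Ideal.Quotient.mkₐ_ker k _) ?_
  have hmap : (residualTraceRel k A).map π.toLinearMap ≤
      Submodule.span k {z | ∃ a b, z = a * b - b * a} := by
    rw [residualTraceRel, Submodule.map_sup, Submodule.map_span]
    refine sup_le ?_ (Submodule.span_mono ?_)
    · rintro _ ⟨a, ha, rfl⟩
      simp only [AlgHom.toLinearMap_apply, π, Ideal.Quotient.mkₐ_eq_mk,
        Ideal.Quotient.eq_zero_iff_mem.mpr ha, zero_mem]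
    · rintro _ ⟨_, ⟨a, b, rfl⟩, rfl⟩
      exact ⟨π a, π b, by simp⟩
  simpa using hmap ⟨1, h1, map_one π⟩

end ResidualTrace

end

namespace CategoryTheory

variable {C : Type u} [Category.{v} C] [Preadditive C]

def Iso.conjRingEquiv {X Y : C} (e : X ≅ Y) : End X ≃+* End Y :=
  { e.conj with
    map_add' := fun f g => by
      change e.inv ≫ (f + g : X ⟶ X) ≫ e.hom = e.inv ≫ f ≫ e.hom + e.inv ≫ g ≫ e.hom
      rw [Preadditive.add_comp, Preadditive.comp_add] }

theorem isLocalRing_end_of_iso {X Y : C} (e : X ≅ Y) [IsLocalRing (End X)] :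
    IsLocalRing (End Y) :=
  RingHom.domain_isLocalRing (e.symm.conjRingEquiv : End Y →+* End X)

theorem not_isZero_of_isLocalRing_end (X : C) [IsLocalRing (End X)] : ¬IsZero X :=
  fun h => one_ne_zero (α := End X) ((IsZero.iff_id_eq_zero X).mp h)

theorem isIso_of_isSplitMono_of_isLocalRing_end {X Y : C} [IsLocalRing (End Y)] (u : X ⟶ Y)
    [IsSplitMono u] (hX : ¬IsZero X) : IsIso u := by
  have hidem : IsIdempotentElem (End.of (retraction u ≫ u)) := by
    simp [IsIdempotentElem, End.mul_def, End.of]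
  rcases IsLocalRing.eq_zero_or_eq_one_of_isIdempotentElem hidem with h | h
  · refine absurd ((IsZero.iff_id_eq_zero X).mpr ?_) hX
    calc 𝟙 X = u ≫ (retraction u ≫ u) ≫ retraction u := by simp
      _ = 0 := by rw [show retraction u ≫ u = 0 from h]; simp
  · exact ⟨retraction u, by simp, h⟩

theorem comp_mem_jacobson_of_not_iso {X Y : C} [IsLocalRing (End X)] [IsLocalRing (End Y)]
    (h : ¬Nonempty (X ≅ Y)) (u : X ⟶ Y) (v : Y ⟶ X) :
    End.of (u ≫ v) ∈ Ideal.jacobson (⊥ : Ideal (End X)) := by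
  refine IsLocalRing.mem_jacobson_bot_of_not_isUnit fun hu => h ?_
  obtain ⟨w, hw⟩ := hu.exists_left_inv
  have : IsSplitMono u := IsSplitMono.mk' ⟨v ≫ w, by simpa [End.mul_def] using hw⟩
  have := isIso_of_isSplitMono_of_isLocalRing_end u (not_isZero_of_isLocalRing_end X)
  exact ⟨asIso u⟩

section Biproducts

variable [HasFiniteBiproducts C]

theorem isZero_biproduct_of_isEmpty {J : Type} [Fintype J] [IsEmpty J] (f : J → C) :
    IsZero (⨁ f) := by
  rw [IsZero.iff_id_eq_zero, ← biproduct.total]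
  simp

noncomputable def biproductFinSuccIso {n : ℕ} (f : Fin (n + 1) → C) :
    ⨁ f ≅ f 0 ⊞ ⨁ (f ∘ Fin.succ) where
  hom := biprod.lift (biproduct.π f 0) (biproduct.lift fun i => biproduct.π f i.succ)
  inv := biprod.desc (biproduct.ι f 0) (biproduct.desc fun i => biproduct.ι f i.succ)
  hom_inv_id := by
    rw [biprod.lift_desc, biproduct.lift_desc, ← biproduct.total, Fin.sum_univ_succ]
  inv_hom_id := by
    ext <;> simp [biproduct.ι_π, Fin.succ_ne_zero, (Fin.succ_ne_zero _).symm]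

theorem Indecomposable.eq_one_of_iso_biproduct {X : C} (hX : Indecomposable X) {n : ℕ}
    {f : Fin n → C} (hf : ∀ i, ¬IsZero (f i)) (e : X ≅ ⨁ f) : n = 1 := by
  match n, f, e with
  | 0, f, e => exact absurd ((isZero_biproduct_of_isEmpty f).of_iso e) hX.1
  | 1, _, _ => rfl
  | _ + 2, f, e =>
    rcases hX.2 _ _ (e ≪≫ biproductFinSuccIso f) with h | h
    · exact absurd h (hf 0)
    · exact absurd (h.of_mono (biproduct.ι (f ∘ Fin.succ) 0)) (hf 1)

end Biproducts

end CategoryTheory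

section GrothendieckGroup

variable {C : Type u} [Category.{v} C] [Preadditive C] [CategoryTheory.Linear k C]
  [HasFiniteBiproducts C]

theorem K0mk_eq_of_iso {x y : C} (e : x ≅ y) : K0mk k x = K0mk k y :=
  (Submodule.Quotient.eq _).mpr (Submodule.subset_span (Or.inr ⟨x, y, ⟨e⟩, rfl⟩))

theorem K0mk_biprod (x y : C) : K0mk k (x ⊞ y) = K0mk k x + K0mk k y := by
  rw [K0mk, K0mk, K0mk, ← Submodule.Quotient.mk_add, Submodule.Quotient.eq, sub_add_eq_sub_sub]
  exact Submodule.subset_span (Or.inl ⟨x, y, rfl⟩)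

theorem K0mk_eq_zero_of_isZero {z : C} (hz : IsZero z) : K0mk k z = 0 := by
  have hzz : IsZero (z ⊞ z) := (biprod_isZero_iff z z).mpr ⟨hz, hz⟩
  have h := K0mk_eq_of_iso k (hzz.iso hz)
  rwa [K0mk_biprod, add_eq_left] at h

theorem K0mk_biproduct {n : ℕ} (f : Fin n → C) : K0mk k (⨁ f) = ∑ i, K0mk k (f i) := by
  induction n with
  | zero => simpa using K0mk_eq_zero_of_isZero k (isZero_biproduct_of_isEmpty f)
  | succ n ih =>
    rw [K0mk_eq_of_iso k (biproductFinSuccIso f), K0mk_biprod, ih, Fin.sum_univ_succ]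
    rfl

theorem span_range_K0mk : Submodule.span k (Set.range (K0mk k : C → K0k k C)) = ⊤ := by
  rw [eq_top_iff]
  rintro u -
  induction u using Submodule.Quotient.induction_on with | _ c
  induction c using Finsupp.induction_linear with
  | zero => exact zero_mem _
  | add c c' hc hc' => simpa only [Submodule.Quotient.mk_add] using add_mem hc hc'
  | single z r =>
    rw [← mul_one r, ← smul_eq_mul, ← Finsupp.smul_single, Submodule.Quotient.mk_smul]
    exact Submodule.smul_mem _ r (Submodule.subset_span ⟨z, rfl⟩)

theorem chern_K0mk (x : C) : chern k C (K0mk k x) = traceMk k (𝟙 x) := by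
  rw [K0mk, chern, Submodule.liftQ_apply, Finsupp.linearCombination_single, one_smul]

end GrothendieckGroup

section ClassAt

variable {C : Type u} [Category.{v} C] [Preadditive C] [Linear k C]

open Classical in
noncomputable def classAt (x : C) {y : C} : (y ⟶ y) →ₗ[k] ResidualTrace k (End x) :=
  if h : y = x then h ▸ ResidualTrace.mk k (End x) else 0

theorem classAt_self {x : C} (f : End x) : classAt k x f = ResidualTrace.mk k (End x) f := by
  rw [classAt, dif_pos rfl]

theorem classAt_of_ne {x y : C} (h : y ≠ x) (f : End y) : classAt k x f = 0 := by
  simp [classAt, h]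

theorem classAt_id [DecidableEq C] (y : C) :
    (fun x => classAt k x (𝟙 y)) = Pi.single y (ResidualTrace.mk k (End y) 1) := by
  funext x
  by_cases h : y = x
  · subst h
    rw [classAt_self, Pi.single_eq_same]
    rfl
  · rw [classAt_of_ne k h, Pi.single_eq_of_ne' h]

theorem classAt_comp_comm {y y' : C} [IsLocalRing (End y)] [IsLocalRing (End y')]
    (hyy' : Nonempty (y ≅ y') → y = y') (x : C) (u : y ⟶ y') (v : y' ⟶ y) :
    classAt k x (u ≫ v) = classAt k x (v ≫ u) := by
  by_cases hy : y = x <;> by_cases hy' : y' = x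
  · subst hy hy'
    rw [classAt_self, classAt_self]
    exact ResidualTrace.mk_mul_comm (A := End _) k v u
  · subst hy
    rw [classAt_of_ne k hy', classAt_self]
    exact ResidualTrace.mk_eq_zero_of_mem_jacobson k
      (comp_mem_jacobson_of_not_iso (fun h => hy' (hyy' h).symm) u v)
  · subst hy'
    rw [classAt_of_ne k hy, classAt_self]
    exact (ResidualTrace.mk_eq_zero_of_mem_jacobson k
      (comp_mem_jacobson_of_not_iso (fun ⟨e⟩ => hy (hyy' ⟨e.symm⟩)) v u)).symm
  · rw [classAt_of_ne k hy, classAt_of_ne k hy']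

end ClassAt

section Decompositions

variable {C : Type u} [Category.{v} C] [Preadditive C] [HasFiniteBiproducts C]

structure BiproductDecomposition (S : Set C) (z : C) where
  n : ℕ
  f : Fin n → C
  mem : ∀ i, f i ∈ S
  iso : z ≅ ⨁ f

theorem KrullSchmidt.nonempty_biproductDecomposition [Linear k C] (hKS : KrullSchmidt k C)
    {S : Set C} (hS : ∀ x : C, Indecomposable x → ∃ y ∈ S, Nonempty (x ≅ y)) (z : C) :
    Nonempty (BiproductDecomposition S z) := by
  obtain ⟨n, g, hg, ⟨e⟩⟩ := hKS.1 z
  choose f hf e' using fun i => hS (g i) (hg i).1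
  exact ⟨⟨n, f, hf, e ≪≫ biproduct.mapIso fun i => (e' i).some⟩⟩

theorem KrullSchmidt.isLocalRing_end [Linear k C] (hKS : KrullSchmidt k C) {x : C}
    (hx : Indecomposable x) : IsLocalRing (End x) := by
  obtain ⟨n, g, hg, ⟨e⟩⟩ := hKS.1 x
  obtain rfl := hx.eq_one_of_iso_biproduct (fun i => (hg i).1.1) e
  have := (hg 0).2
  exact isLocalRing_end_of_iso (e ≪≫ biproductUniqueIso g).symm

theorem span_K0mk_eq_top_of_biproductDecomposition [Linear k C] {S : Set C}
    (hS : ∀ z : C, Nonempty (BiproductDecomposition S z)) :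
    Submodule.span k (Set.range fun x : S => K0mk k (x : C)) = ⊤ := by
  rw [eq_top_iff, ← span_range_K0mk, Submodule.span_le]
  rintro _ ⟨z, rfl⟩
  obtain ⟨⟨n, f, hf, e⟩⟩ := hS z
  rw [SetLike.mem_coe, K0mk_eq_of_iso k e, K0mk_biproduct]
  exact Submodule.sum_mem _ fun i _ => Submodule.subset_span ⟨⟨f i, hf i⟩, rfl⟩

namespace BiproductDecomposition

variable [Linear k C] {S : Set C} {a b : C}

noncomputable def entry (A : BiproductDecomposition S a) (B : BiproductDecomposition S b)
    (i : Fin A.n) (j : Fin B.n) : (a ⟶ b) →ₗ[k] (A.f i ⟶ B.f j) where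
  toFun f := biproduct.ι A.f i ≫ A.iso.inv ≫ f ≫ B.iso.hom ≫ biproduct.π B.f j
  map_add' f g := by simp
  map_smul' r f := by simp

theorem entry_comp (A : BiproductDecomposition S a) (B : BiproductDecomposition S b)
    (f : a ⟶ b) (g : b ⟶ a) (i i' : Fin A.n) :
    A.entry k A i i' (f ≫ g) = ∑ j, A.entry k B i j f ≫ B.entry k A j i' g := by
  have hfg : f ≫ g = f ≫ B.iso.hom ≫ (∑ j, biproduct.π B.f j ≫ biproduct.ι B.f j) ≫
      B.iso.inv ≫ g := by
    simp [biproduct.total]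
  simp only [entry, LinearMap.coe_mk, AddHom.coe_mk]
  rw [hfg]
  simp only [Preadditive.comp_sum, Preadditive.sum_comp, Category.assoc]

noncomputable def residualTrace (A : BiproductDecomposition S a) :
    (a ⟶ a) →ₗ[k] ∀ x : C, ResidualTrace k (End x) :=
  LinearMap.pi fun x => ∑ i, classAt k x ∘ₗ A.entry k A i i

theorem residualTrace_apply (A : BiproductDecomposition S a) (g : a ⟶ a) (x : C) :
    A.residualTrace k g x = ∑ i, classAt k x (A.entry k A i i g) := by
  simp [residualTrace]

theorem residualTrace_comp_comm (hloc : ∀ x ∈ S, IsLocalRing (End x))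
    (hS : ∀ x ∈ S, ∀ y ∈ S, Nonempty (x ≅ y) → x = y)
    (A : BiproductDecomposition S a) (B : BiproductDecomposition S b) (f : a ⟶ b) (g : b ⟶ a) :
    A.residualTrace k (f ≫ g) = B.residualTrace k (g ≫ f) := by
  funext x
  rw [residualTrace_apply, residualTrace_apply]
  simp only [entry_comp k A B, entry_comp k B A, map_sum]
  rw [Finset.sum_comm]
  refine Finset.sum_congr rfl fun j _ => Finset.sum_congr rfl fun i _ => ?_
  have := hloc _ (A.mem i)
  have := hloc _ (B.mem j)
  exact classAt_comp_comm k (hS _ (A.mem i) _ (B.mem j)) x _ _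

theorem residualTrace_id [DecidableEq C] (hind : ∀ x ∈ S, Indecomposable x)
    (hS : ∀ x ∈ S, ∀ y ∈ S, Nonempty (x ≅ y) → x = y) (hx : a ∈ S)
    (A : BiproductDecomposition S a) :
    A.residualTrace k (𝟙 a) = Pi.single a (ResidualTrace.mk k (End a) 1) := by
  obtain ⟨n, f, hf, e⟩ := A
  obtain rfl := (hind a hx).eq_one_of_iso_biproduct (fun i => (hind _ (hf i)).1) e
  have hfa : f 0 = a := hS _ (hf 0) _ hx ⟨(e ≪≫ biproductUniqueIso f).symm⟩
  calc _ = fun x => classAt k x (𝟙 (f 0)) := by funext x; simp [residualTrace_apply, entry]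
    _ = Pi.single (f 0) (ResidualTrace.mk k (End (f 0)) 1) := classAt_id k (f 0)
    _ = Pi.single a (ResidualTrace.mk k (End a) 1) := by rw [hfa]

end BiproductDecomposition

end Decompositions

section TraceMap

variable {C : Type u} [Category.{v} C] [Preadditive C] [Linear k C] [HasFiniteBiproducts C]
  {S : Set C}

noncomputable def residualTraceMap (hloc : ∀ x ∈ S, IsLocalRing (End x))
    (hS : ∀ x ∈ S, ∀ y ∈ S, Nonempty (x ≅ y) → x = y)
    (d : ∀ z : C, BiproductDecomposition S z) :
    Trace k C →ₗ[k] ∀ x : C, ResidualTrace k (End x) :=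
  -- `traceRel` is stated with `Classical.decEq C`
  letI := Classical.decEq C
  (traceRel k C).liftQ (DirectSum.toModule k C _ fun z => (d z).residualTrace k) <| by
    rw [traceRel, Submodule.span_le]
    rintro _ ⟨a, b, f, g, rfl⟩
    rw [SetLike.mem_coe, LinearMap.mem_ker, map_sub, ← DirectSum.lof_eq_of k,
      ← DirectSum.lof_eq_of k, DirectSum.toModule_lof, DirectSum.toModule_lof]
    exact sub_eq_zero_of_eq ((d a).residualTrace_comp_comm k hloc hS (d b) f g)

theorem residualTraceMap_traceMk (hloc : ∀ x ∈ S, IsLocalRing (End x))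
    (hS : ∀ x ∈ S, ∀ y ∈ S, Nonempty (x ≅ y) → x = y)
    (d : ∀ z : C, BiproductDecomposition S z) {z : C} (f : z ⟶ z) :
    residualTraceMap k hloc hS d (traceMk k f) = (d z).residualTrace k f := by
  rw [traceMk, residualTraceMap, Submodule.liftQ_apply, ← DirectSum.lof_eq_of k,
    DirectSum.toModule_lof]

end TraceMap

/-- Let `C` be a `k`-linear Krull–Schmidt category, `Irep` a set of
representatives of the isomorphism classes of indecomposable objects, and for `x ∈ Irep`
let `D_x = End x / J(End x)`.  If for every `x ∈ Irep` the identity of `D_x` does not lie in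
the `k`-span of commutators, then the Chern character `h_C : K₀(C) ⊗ k → Tr(C)` is
injective. -/
theorem chern_injective_of_one_not_mem_commutator_span
    (C : Type u) [Category.{v} C] [Preadditive C] [CategoryTheory.Linear k C]
    [HasFiniteBiproducts C]
    (hKS : KrullSchmidt k C)
    (Irep : Set C)
    (hrep₁ : ∀ x ∈ Irep, CategoryTheory.Indecomposable x)
    (hrep₂ : ∀ x : C, CategoryTheory.Indecomposable x → ∃ y ∈ Irep, Nonempty (x ≅ y))
    (hrep₃ : ∀ y ∈ Irep, ∀ y' ∈ Irep, Nonempty (y ≅ y') → y = y')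
    (hD : ∀ x ∈ Irep, ∀ (D : Type v) [Ring D] [Algebra k D] (π : End x →ₐ[k] D),
        Function.Surjective π →
        RingHom.ker (π : End x →+* D) = Ideal.jacobson (⊥ : Ideal (End x)) →
        (1 : D) ∉ Submodule.span k {z : D | ∃ a b : D, z = a * b - b * a}) :
    Function.Injective (chern k C) := by
  classical
  have hloc : ∀ x ∈ Irep, IsLocalRing (End x) :=
    fun x hx => hKS.isLocalRing_end k (hrep₁ x hx)
  have d := fun z => (hKS.nonempty_biproductDecomposition k hrep₂ z).some
  let T := residualTraceMap k hloc hrep₃ d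
  have hTv : (T ∘ₗ chern k C) ∘ (fun x : Irep => K0mk k (x : C)) =
      fun x : Irep => Pi.single (x : C) (ResidualTrace.mk k (End (x : C)) 1) := by
    funext x
    rw [Function.comp_apply, LinearMap.comp_apply, chern_K0mk, residualTraceMap_traceMk,
      BiproductDecomposition.residualTrace_id k hrep₁ hrep₃ x.2]
  have hli : LinearIndependent k ((T ∘ₗ chern k C) ∘ fun x : Irep => K0mk k (x : C)) := by
    have hne : ∀ x ∈ Irep, ResidualTrace.mk k (End x) 1 ≠ 0 :=
      fun x hx => ResidualTrace.mk_one_ne_zero k (hD x hx)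
    rw [hTv]
    exact Pi.linearIndependent_single_of_ne_zero_on k
      (m := fun x => ResidualTrace.mk k (End x) 1) hne
  exact Function.Injective.of_comp (f := T) <| LinearMap.injective_of_linearIndependent
    (span_K0mk_eq_top_of_biproductDecomposition k fun z => ⟨d z⟩) hli
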